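/- arXiv:1803.10790 — 5 statements merged into one kernel-verified Lean document; each statement's English description precedes it below -/
import Mathlib

section
/- Let A be a commutative ring with identity and let a ∈ A. An element (a₁,…,aₙ,a) ∈ U_{n+1}(A) (i.e., a unimodular (n+1)-tuple) is reducible (i.e., there exist c₁,…,cₙ ∈ A with (a₁+c₁a,…,aₙ+cₙa) unimodular) if and only if the map U_n(A) → U_n(A/(a)) induced by the quotient homomorphism A → A/(a) is surjective, where (a) denotes the principal ideal generated by a. -/
open scoped BigOperators

/-- A tuple is unimodular if some combination of its entries equals 1. -/
def Unimodular {A : Type*} [CommRing A] {n : ℕ} (a : Fin n → A) : Prop :=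
  ∃ b : Fin n → A, ∑ i, b i * a i = 1

/-- Lemma 2.6: a unimodular tuple of the form `(a₁,…,aₙ,a)` is reducible
if and only if the map `U_n(A) → U_n(A/(a))` induced by the quotient
homomorphism is surjective. -/
theorem stmt0 {A : Type*} [CommRing A] (n : ℕ) (a : A) :
    (∀ a' : Fin n → A, Unimodular (Fin.snoc a' a) →
      ∃ c : Fin n → A, Unimodular (fun i => a' i + c i * a)) ↔
    (∀ v : Fin n → A ⧸ Ideal.span {a}, Unimodular v →
      ∃ u : Fin n → A, Unimodular u ∧
        ∀ i, Ideal.Quotient.mk (Ideal.span {a}) (u i) = v i) := by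
  constructor
  · intro h v hv
    -- lift v and the unimodular witness
    choose a' ha' using fun i => Ideal.Quotient.mk_surjective (I := Ideal.span {a}) (v i)
    obtain ⟨bb, hbb⟩ := hv
    choose b hb using fun i => Ideal.Quotient.mk_surjective (I := Ideal.span {a}) (bb i)
    have hmem : (∑ i, b i * a' i) - 1 ∈ Ideal.span {a} := by
      rw [← Ideal.Quotient.eq_zero_iff_mem]
      simp only [map_sub, map_sum, map_mul, map_one, hb, ha', hbb, sub_self]
    obtain ⟨t, ht⟩ := Ideal.mem_span_singleton'.mp hmem
    have huni : Unimodular (Fin.snoc a' a : Fin (n + 1) → A) := by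
      refine ⟨Fin.snoc b (-t), ?_⟩
      rw [Fin.sum_univ_castSucc]
      simp only [Fin.snoc_castSucc, Fin.snoc_last]
      have : ∑ i, b i * a' i = 1 + t * a := by linear_combination -ht
      rw [this]; ring
    obtain ⟨c, hc⟩ := h a' huni
    refine ⟨fun i => a' i + c i * a, hc, fun i => ?_⟩
    rw [← ha' i]
    have : Ideal.Quotient.mk (Ideal.span {a}) a = 0 := by
      rw [Ideal.Quotient.eq_zero_iff_mem]; exact Ideal.mem_span_singleton_self a
    simp [this]
  · intro h a' ha'
    obtain ⟨b, hb⟩ := ha'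
    have hv : Unimodular (fun i => Ideal.Quotient.mk (Ideal.span {a}) (a' i)) := by
      refine ⟨fun i => Ideal.Quotient.mk (Ideal.span {a}) (b i.castSucc), ?_⟩
      have ha0 : Ideal.Quotient.mk (Ideal.span {a}) a = 0 := by
        rw [Ideal.Quotient.eq_zero_iff_mem]; exact Ideal.mem_span_singleton_self a
      have := congrArg (Ideal.Quotient.mk (Ideal.span {a})) hb
      rw [Fin.sum_univ_castSucc] at this
      simp only [map_add, map_sum, map_mul, map_one, Fin.snoc_castSucc, Fin.snoc_last,
        ha0, mul_zero, add_zero] at this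
      exact this
    obtain ⟨u, hu, huv⟩ := h _ hv
    have hmem : ∀ i, u i - a' i ∈ Ideal.span {a} := fun i => by
      rw [← Ideal.Quotient.eq_zero_iff_mem, map_sub, huv i, sub_self]
    choose c hc using fun i => Ideal.mem_span_singleton'.mp (hmem i)
    refine ⟨c, ?_⟩
    have : (fun i => a' i + c i * a) = u := funext fun i => by linear_combination hc i
    rw [this]; exact hu
end

section
/- Let A be a commutative ring with identity and suppose A is the product of a family of rings (Aᵢ)_{i∈I}. Then sr(A) = sup_{i∈I} sr(Aᵢ). -/
open scoped BigOperators

/-- A unimodular `(n+1)`-tuple is reducible if adding multiples of the last entry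
to the first `n` entries yields a unimodular `n`-tuple. -/
def Reducible {A : Type*} [CommRing A] {n : ℕ} (a : Fin (n + 1) → A) : Prop :=
  ∃ c : Fin n → A,
    Unimodular (fun i : Fin n => a i.castSucc + c i * a (Fin.last n))

/-- `srLE A n` : the Bass stable rank of `A` is at most `n`, i.e. every
unimodular `(n+1)`-tuple is reducible. -/
def srLE (A : Type*) [CommRing A] (n : ℕ) : Prop :=
  ∀ a : Fin (n + 1) → A, Unimodular a → Reducible a

/-- The Bass stable rank of `A`, as an extended natural number
(`⊤` if no `n` works). -/
noncomputable def sr (A : Type*) [CommRing A] : ℕ∞ :=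
  sInf {c : ℕ∞ | ∃ n : ℕ, c = (n : ℕ∞) ∧ srLE A n}

lemma srLE_succ {A : Type*} [CommRing A] {n : ℕ} (h : srLE A n) : srLE A (n + 1) := by
  rintro a ⟨b, hb⟩
  -- auxiliary (n+1)-tuple
  set z : A := b (Fin.last n).castSucc * a (Fin.last n).castSucc
      + b (Fin.last (n+1)) * a (Fin.last (n+1)) with hz
  set a' : Fin (n+1) → A := Fin.snoc (fun i : Fin n => a i.castSucc.castSucc) z with ha'
  have ha'uni : Unimodular a' := by
    refine ⟨Fin.snoc (fun i : Fin n => b i.castSucc.castSucc) 1, ?_⟩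
    rw [Fin.sum_univ_castSucc]
    simp only [ha', Fin.snoc_castSucc, Fin.snoc_last, one_mul]
    rw [Fin.sum_univ_castSucc, Fin.sum_univ_castSucc] at hb
    rw [hz]; linear_combination hb
  obtain ⟨c, d, hd⟩ := h a' ha'uni
  refine ⟨Fin.snoc (fun i : Fin n => c i * b (Fin.last (n+1))) 0,
    Fin.snoc d (∑ i, d i * c i * b (Fin.last n).castSucc), ?_⟩
  rw [Fin.sum_univ_castSucc]
  simp only [Fin.snoc_castSucc, Fin.snoc_last, zero_mul, add_zero]
  simp only [ha', Fin.snoc_castSucc, Fin.snoc_last] at hd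
  rw [Finset.sum_mul] at *
  calc (∑ i : Fin n, d i * (a i.castSucc.castSucc + c i * b (Fin.last (n+1)) * a (Fin.last (n+1))))
        + ∑ i : Fin n, d i * c i * b (Fin.last n).castSucc * a (Fin.last n).castSucc
      = ∑ i : Fin n, d i * (a i.castSucc.castSucc + c i * z) := by
        rw [← Finset.sum_add_distrib]; congr 1; ext i; rw [hz]; ring
    _ = 1 := hd

lemma srLE_pi {I : Type*} (A : I → Type*) [∀ i, CommRing (A i)] (n : ℕ) :
    srLE (∀ i, A i) n ↔ ∀ i, srLE (A i) n := by
  constructor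
  · intro h i a ⟨b, hb⟩
    classical
    set abar : Fin (n+1) → ∀ j, A j := fun k =>
      Function.update (fun j => if k = 0 then (1 : A j) else 0) i (a k) with habar
    set bbar : Fin (n+1) → ∀ j, A j := fun k =>
      Function.update (fun j => if k = 0 then (1 : A j) else 0) i (b k) with hbbar
    have huni : Unimodular abar := by
      refine ⟨bbar, ?_⟩
      funext j
      simp only [Finset.sum_apply, Pi.mul_apply, Pi.one_apply, habar, hbbar]
      by_cases hj : j = i
      · subst hj; simpa using hb
      · rw [Fintype.sum_eq_single 0]
        · simp [Function.update_of_ne hj]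
        · intro k hk; simp [Function.update_of_ne hj, hk]
    obtain ⟨c, d, hd⟩ := h abar huni
    refine ⟨fun k => c k i, fun k => d k i, ?_⟩
    have := congrFun hd i
    simp only [Finset.sum_apply, Pi.add_apply, Pi.mul_apply, Pi.one_apply, habar,
      Function.update_self] at this
    exact this
  · intro h a ⟨b, hb⟩
    choose c d hd using fun i => h i (fun k => a k i)
      ⟨fun k => b k i, by simpa using congrFun hb i⟩
    refine ⟨fun k i => c i k, fun k i => d i k, ?_⟩
    funext i
    simpa using hd i

lemma srLE_mono {A : Type*} [CommRing A] {n m : ℕ} (h : srLE A n) (hnm : n ≤ m) :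
    srLE A m := by
  induction m with
  | zero => exact Nat.le_zero.mp hnm ▸ h
  | succ k ih =>
    rcases Nat.lt_or_ge n (k+1) with h1 | h1
    · exact srLE_succ (ih (Nat.lt_succ_iff.mp h1))
    · exact Nat.le_antisymm hnm h1 ▸ h

lemma sr_le_iff {A : Type*} [CommRing A] {n : ℕ} : sr A ≤ (n : ℕ∞) ↔ srLE A n := by
  constructor
  · intro h
    have h2 : sr A < ((n + 1 : ℕ) : ℕ∞) :=
      lt_of_le_of_lt h (by exact_mod_cast Nat.lt_succ_self n)
    obtain ⟨c, ⟨m, rfl, hm⟩, hc⟩ := sInf_lt_iff.mp h2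
    have : m ≤ n := Nat.lt_succ_iff.mp (by exact_mod_cast hc)
    exact srLE_mono hm this
  · intro h
    exact sInf_le ⟨n, rfl, h⟩

/-- The stable rank of a product ring is the supremum of the stable ranks of
the factors. -/
theorem stmt5 {I : Type*} (A : I → Type*) [∀ i, CommRing (A i)] :
    sr (∀ i, A i) = ⨆ i, sr (A i) := by
  apply le_antisymm
  · by_cases hs : (⨆ i, sr (A i)) = ⊤
    · simp [hs]
    · lift (⨆ i, sr (A i)) to ℕ using hs with n hn
      refine sr_le_iff.mpr ((srLE_pi A n).mpr fun i => sr_le_iff.mp ?_)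
      exact hn ▸ le_iSup (fun i => sr (A i)) i
  · refine iSup_le fun i => sInf_le_sInf ?_
    rintro c ⟨n, rfl, hn⟩
    exact ⟨n, rfl, (srLE_pi A n).mp hn i⟩
end

section
/- Let A be a commutative ring with identity. If sr(A) ≤ n, then every matrix in SL_m(A) whose reduction modulo the Jacobson radical is the identity lies in E_m(A). -/
open scoped BigOperators

/-- An elementary matrix: differs from the identity in at most one
off-diagonal entry. -/
def IsElementary {A : Type*} [CommRing A] {n : ℕ}
    (E : Matrix (Fin n) (Fin n) A) : Prop :=
  ∃ i j : Fin n, ∃ a : A, i ≠ j ∧ E = 1 + Matrix.single i j a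

/-- The set of products of elementary matrices; since the inverse of an
elementary matrix is elementary, this is the group `E_n(A)`. -/
def ElemSubgroup (A : Type*) [CommRing A] (n : ℕ) :
    Submonoid (Matrix (Fin n) (Fin n) A) :=
  Submonoid.closure {E | IsElementary E}

/-!
The pivot in the bottom-right corner of `M` is `≡ 1` modulo the Jacobson radical, hence a unit
`u`. The block LDU factorisation around it writes `M` as an upper and a lower unitriangular
block matrix, both products of transvections, around `diag(S, u)`, where the Schur complement `S`
is again `≡ 1` and `u * det S = 1`. By Whitehead's lemma `diag(u⁻¹, u)` is a product of
transvections, and splitting it off leaves `diag(diag(u, 1, …, 1) * S, 1)`, to which induction on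
the size applies.
-/

namespace Matrix

variable {R : Type*} [CommRing R]

section Elementary

variable (R) (n : Type*) [Fintype n] [DecidableEq n]

def elementarySubmonoid : Submonoid (Matrix n n R) :=
  Submonoid.closure (Set.range TransvectionStruct.toMatrix)

variable {R n} {m o : Type*} [DecidableEq m] [DecidableEq o]

theorem fromBlocks_single_eq_transvection (i : m) (j : o) (c : R) :
    fromBlocks 1 (single i j c) 0 1 = transvection (Sum.inl i) (Sum.inr j) c := by
  ext (a | a) (b | b) <;> simp [transvection, single, one_apply]

variable [Fintype m] [Fintype o]

theorem transvection_mem_elementarySubmonoid {i j : n} (hij : i ≠ j) (c : R) :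
    transvection i j c ∈ elementarySubmonoid R n :=
  Submonoid.subset_closure ⟨⟨i, j, hij, c⟩, rfl⟩

theorem transpose_mem_elementarySubmonoid {M : Matrix n n R}
    (hM : M ∈ elementarySubmonoid R n) : Mᵀ ∈ elementarySubmonoid R n := by
  induction hM using Submonoid.closure_induction with
  | mem _ h =>
    obtain ⟨⟨i, j, hij, c⟩, rfl⟩ := h
    simpa [transvection, transpose_single] using
      transvection_mem_elementarySubmonoid hij.symm c
  | one => simp
  | mul _ _ _ _ hx hy => simpa using mul_mem hy hx

theorem reindex_mem_elementarySubmonoid (e : m ≃ n) {M : Matrix m m R}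
    (hM : M ∈ elementarySubmonoid R m) : reindex e e M ∈ elementarySubmonoid R n := by
  rw [← coe_reindexAlgEquiv R R]
  induction hM using Submonoid.closure_induction with
  | mem _ h =>
    obtain ⟨t, rfl⟩ := h
    exact Submonoid.subset_closure ⟨t.reindexEquiv e, t.toMatrix_reindexEquiv e⟩
  | one => simp
  | mul _ _ _ _ hx hy => simpa using mul_mem hx hy

theorem fromBlocks_mem_elementarySubmonoid_of_mem {M : Matrix m m R}
    (hM : M ∈ elementarySubmonoid R m) :
    fromBlocks M 0 0 1 ∈ elementarySubmonoid R (m ⊕ o) := by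
  induction hM using Submonoid.closure_induction with
  | mem _ h =>
    obtain ⟨t, rfl⟩ := h
    exact Submonoid.subset_closure ⟨t.sumInl o, t.toMatrix_sumInl o⟩
  | one => simp
  | mul _ _ _ _ hx hy => simpa [fromBlocks_multiply] using mul_mem hx hy

theorem fromBlocks_one_zero₂₁_mem_elementarySubmonoid (B : Matrix m o R) :
    fromBlocks 1 B 0 1 ∈ elementarySubmonoid R (m ⊕ o) := by
  induction B using Matrix.induction_on' with
  | h_zero => simp
  | h_add p q hp hq =>
    convert mul_mem hp hq using 1
    simp [fromBlocks_multiply, add_comm]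
  | h_std_basis i j c =>
    rw [fromBlocks_single_eq_transvection]
    exact transvection_mem_elementarySubmonoid Sum.inl_ne_inr c

theorem fromBlocks_one_zero₁₂_mem_elementarySubmonoid (C : Matrix o m R) :
    fromBlocks 1 0 C 1 ∈ elementarySubmonoid R (m ⊕ o) := by
  simpa [fromBlocks_transpose] using
    transpose_mem_elementarySubmonoid (fromBlocks_one_zero₂₁_mem_elementarySubmonoid Cᵀ)

theorem fromBlocks_mem_elementarySubmonoid_of_schur (A : Matrix m m R) (B : Matrix m o R)
    (C : Matrix o m R) (D : Matrix o o R) [Invertible D]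
    (h : fromBlocks (A - B * ⅟D * C) 0 0 D ∈ elementarySubmonoid R (m ⊕ o)) :
    fromBlocks A B C D ∈ elementarySubmonoid R (m ⊕ o) := by
  rw [fromBlocks_eq_of_invertible₂₂]
  exact mul_mem (mul_mem (fromBlocks_one_zero₂₁_mem_elementarySubmonoid _) h)
    (fromBlocks_one_zero₁₂_mem_elementarySubmonoid _)

/-- Whitehead's lemma, from `w(a) * w(-1) = diag(a, a⁻¹)` for `w(a) = e_ij(a) e_ji(-a⁻¹) e_ij(a)`. -/
theorem diagonal_mulSingle_mul_mulSingle_mem_elementarySubmonoid {i j : n} (hij : i ≠ j)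
    (u : Rˣ) :
    diagonal (Pi.mulSingle i (↑u⁻¹ : R) * Pi.mulSingle j (u : R)) ∈ elementarySubmonoid R n := by
  have whitehead : transvection i j (↑u⁻¹ : R) * transvection j i (-(u : R)) *
      transvection i j (↑u⁻¹ : R) * transvection i j (-1) * transvection j i 1 *
      transvection i j (-1) = diagonal (Pi.mulSingle i (↑u⁻¹ : R) * Pi.mulSingle j (u : R)) := by
    have hu : (↑u⁻¹ : R) * u = 1 := u.inv_mul
    ext a b
    simp only [Matrix.mul_assoc]
    by_cases hai : a = i <;> by_cases haj : a = j <;>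
      simp only [hai, haj, transvection_mul_apply_same, transvection_mul_apply_of_ne, ne_eq, hij,
        hij.symm, not_false_eq_true] <;>
      simp only [transvection, Matrix.add_apply, one_apply, single_apply, diagonal_apply,
        Pi.mul_apply, Pi.mulSingle_apply] <;>
      by_cases hbi : b = i <;> by_cases hbj : b = j <;> simp_all [eq_comm]
  rw [← whitehead]
  have hij' := transvection_mem_elementarySubmonoid (R := R) hij
  have hji' := transvection_mem_elementarySubmonoid (R := R) hij.symm
  exact mul_mem (mul_mem (mul_mem (mul_mem (mul_mem (hij' _) (hji' _)) (hij' _)) (hij' _))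
    (hji' _)) (hij' _)

theorem fromBlocks_mem_elementarySubmonoid_of_diagonal_mul_mem [Unique o] (i₀ : m) (u : Rˣ)
    {N : Matrix m m R} {D : Matrix o o R} (hD : D default default = u)
    (hN : diagonal (Pi.mulSingle i₀ (u : R)) * N ∈ elementarySubmonoid R m) :
    fromBlocks N 0 0 D ∈ elementarySubmonoid R (m ⊕ o) := by
  have split : fromBlocks N 0 0 D =
      diagonal (Pi.mulSingle (Sum.inl i₀) (↑u⁻¹ : R) * Pi.mulSingle (Sum.inr default) (u : R)) *
        fromBlocks (diagonal (Pi.mulSingle i₀ (u : R)) * N) 0 0 1 := by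
    ext (a | a) (b | b)
    · by_cases ha : a = i₀ <;> simp [diagonal_mul, ha]
    · simp [diagonal_mul]
    · simp [diagonal_mul]
    · simp [diagonal_mul, Subsingleton.elim a default, Subsingleton.elim b default, hD]
  rw [split]
  exact mul_mem (diagonal_mulSingle_mul_mulSingle_mem_elementarySubmonoid Sum.inl_ne_inr u)
    (fromBlocks_mem_elementarySubmonoid_of_mem hN)

end Elementary

section Congruence

variable {S : Type*} [CommRing S] {f : R →+* S}

theorem isUnit_of_map_eq_one (hf : RingHom.ker f ≤ (⊥ : Ideal R).jacobson) {x : R}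
    (hx : f x = 1) : IsUnit x :=
  Ideal.isUnit_of_sub_one_mem_jacobson_bot x <|
    hf <| (RingHom.sub_mem_ker_iff f).2 (by rw [hx, map_one])

variable {m o : Type*} [Fintype m] [DecidableEq m] [Fintype o] [DecidableEq o] [Unique o]

theorem mem_elementarySubmonoid_sum_of_map_eq_one
    (hf : RingHom.ker f ≤ (⊥ : Ideal R).jacobson) (i₀ : m)
    (ih : ∀ N : Matrix m m R, N.det = 1 → N.map f = 1 → N ∈ elementarySubmonoid R m)
    {M : Matrix (m ⊕ o) (m ⊕ o) R} (hdet : M.det = 1) (hM : M.map f = 1) :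
    M ∈ elementarySubmonoid R (m ⊕ o) := by
  obtain ⟨A, B, C, D, rfl⟩ : ∃ A B C D, M = fromBlocks A B C D :=
    ⟨_, _, _, _, (fromBlocks_toBlocks M).symm⟩
  rw [fromBlocks_map, ← fromBlocks_one, fromBlocks_inj] at hM
  obtain ⟨hA, hB, hC, hD⟩ := hM
  have hfD : f (D default default) = 1 := by simpa using congr_fun₂ hD default default
  obtain ⟨u, hu⟩ := isUnit_of_map_eq_one hf hfD
  have : Invertible D :=
    ((isUnit_iff_isUnit_det D).2 (by rw [det_unique, ← hu]; exact u.isUnit)).invertible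
  have hschur : (A - B * ⅟D * C).map f = 1 := by
    rw [Matrix.map_sub f (map_sub f), Matrix.map_mul, Matrix.map_mul, hA, hB, hC]
    simp
  apply fromBlocks_mem_elementarySubmonoid_of_schur
  apply fromBlocks_mem_elementarySubmonoid_of_diagonal_mul_mem i₀ u hu.symm
  apply ih
  · rw [det_fromBlocks₂₂, det_unique, ← hu] at hdet
    rw [det_mul, det_diagonal, Finset.prod_pi_mulSingle', if_pos (Finset.mem_univ _), hdet]
  · rw [Matrix.map_mul, hschur, diagonal_map (map_zero f), mul_one, ← diagonal_one]
    congr 1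
    ext i
    by_cases hi : i = i₀ <;> simp [hi, hu, hfD]

theorem mem_elementarySubmonoid_of_det_eq_one_of_map_eq_one
    (hf : RingHom.ker f ≤ (⊥ : Ideal R).jacobson) :
    ∀ {k : ℕ} {M : Matrix (Fin k) (Fin k) R}, M.det = 1 → M.map f = 1 →
      M ∈ elementarySubmonoid R (Fin k)
  | 0, M, _, _ => by
    rw [Subsingleton.elim M 1]
    exact one_mem _
  | 1, M, hdet, _ => by
    have : M = 1 := by
      ext i j
      rw [Subsingleton.elim i default, Subsingleton.elim j default, one_apply_eq, ← hdet,
        det_unique]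
    rw [this]
    exact one_mem _
  | k + 2, M, hdet, hM => by
    let e : Fin (k + 1) ⊕ Fin 1 ≃ Fin (k + 2) := finSumFinEquiv
    have := mem_elementarySubmonoid_sum_of_map_eq_one hf 0
      (fun N => mem_elementarySubmonoid_of_det_eq_one_of_map_eq_one hf (M := N))
      (M := reindex e.symm e.symm M) (by rw [det_reindex_self, hdet])
      (by rw [reindex_apply, ← submatrix_map, hM, submatrix_one_equiv])
    simpa using reindex_mem_elementarySubmonoid e this

end Congruence

end Matrix

theorem elemSubgroup_eq_elementarySubmonoid (R : Type*) [CommRing R] (m : ℕ) :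
    ElemSubgroup R m = Matrix.elementarySubmonoid R (Fin m) := by
  unfold ElemSubgroup Matrix.elementarySubmonoid
  congr 1
  ext E
  exact ⟨fun ⟨i, j, c, hij, hE⟩ => ⟨⟨i, j, hij, c⟩, hE.symm⟩,
    fun ⟨⟨i, j, hij, c⟩, hE⟩ => ⟨i, j, c, hij, hE.symm⟩⟩

theorem stmt10_general {A : Type*} [CommRing A]
    (m : ℕ) (M : Matrix (Fin m) (Fin m) A) (hdet : M.det = 1)
    (hM : M.map (Ideal.Quotient.mk ((⊥ : Ideal A).jacobson)) = 1) :
    M ∈ ElemSubgroup A m := by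
  rw [elemSubgroup_eq_elementarySubmonoid]
  exact Matrix.mem_elementarySubmonoid_of_det_eq_one_of_map_eq_one Ideal.mk_ker.le hdet hM

/-- If `sr(A) ≤ n`, then every matrix in `SL_m(A)` whose entrywise reduction
modulo the Jacobson radical is the identity lies in `E_m(A)`. -/
theorem stmt10 {A : Type*} [CommRing A] (n : ℕ) (hsr : sr A ≤ (n : ℕ∞))
    (m : ℕ) (M : Matrix (Fin m) (Fin m) A) (hdet : M.det = 1)
    (hM : M.map (Ideal.Quotient.mk ((⊥ : Ideal A).jacobson)) = 1) :
    M ∈ ElemSubgroup A m :=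
  stmt10_general m M hdet hM
end

section
/- Let A be a commutative ring with identity, and let N ⊆ A be an ideal such that every element of N is nilpotent and A is a ℚ-algebra. Suppose M ∈ SL_m(A) satisfies that all entries of I_m − M lie in N. Then M ∈ E_m(A), i.e., M is a product of elementary matrices. -/
/-!
Let `J` be the ideal generated by the entries of `1 - M`; being finitely generated and nil, it is
nilpotent, so it suffices to approximate `M` by elements of `E_m(A)` modulo each power of `J`.
Modulo a square-zero ideal `K`, matrices `1 + X` with `X` over `K` multiply by adding the `X`'s,
and `det (1 + X) = 1 + tr X`. So if the determinant is `1`, then `tr X = 0` and `1 + X` is the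
product of the transvections `1 + X i j • e i j` (`i ≠ j`) and the Whitehead matrices
`1 + X i i • (e i i - e z z)` for a fixed index `z`; the latter lie in `E_m` because
`X i i ^ 2 = 0`. Since elementary matrices lift along `A → A ⧸ J ^ (t + 1)`, an approximation
modulo `J ^ t` is thereby improved to one modulo `J ^ (t + 1)`.
-/

open scoped BigOperators

open Matrix

section Elementary

variable {A B : Type*} [CommRing A] [CommRing B] {m : ℕ}

lemma transvection_mem_elemSubgroup {i j : Fin m} (hij : i ≠ j) (a : A) :
    transvection i j a ∈ ElemSubgroup A m :=
  Submonoid.subset_closure ⟨i, j, a, hij, rfl⟩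

lemma det_eq_one_of_mem_elemSubgroup {P : Matrix (Fin m) (Fin m) A}
    (hP : P ∈ ElemSubgroup A m) : P.det = 1 := by
  induction hP using Submonoid.closure_induction with
  | mem E hE =>
    obtain ⟨i, j, a, hij, rfl⟩ := hE
    exact det_transvection_of_ne i j hij a
  | one => exact det_one
  | mul P Q _ _ hP hQ => rw [det_mul, hP, hQ, one_mul]

lemma inv_mem_elemSubgroup {P : Matrix (Fin m) (Fin m) A} (hP : P ∈ ElemSubgroup A m) :
    P⁻¹ ∈ ElemSubgroup A m := by
  induction hP using Submonoid.closure_induction with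
  | mem E hE =>
    obtain ⟨i, j, a, hij, rfl⟩ := hE
    have hinv : transvection i j (-a) * transvection i j a = 1 := by
      rw [transvection_mul_transvection_same i j hij, neg_add_cancel, transvection_zero]
    rw [show 1 + single i j a = transvection i j a from rfl, inv_eq_left_inv hinv]
    exact transvection_mem_elemSubgroup hij (-a)
  | one => simp [(ElemSubgroup A m).one_mem]
  | mul P Q _ _ hP hQ => exact mul_inv_rev P Q ▸ mul_mem hQ hP

lemma map_elemSubgroup_of_surjective {f : A →+* B} (hf : Function.Surjective f) :
    (ElemSubgroup A m).map f.mapMatrix = ElemSubgroup B m := by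
  rw [ElemSubgroup, ElemSubgroup, MonoidHom.map_mclosure]
  congr 1
  ext E
  constructor
  · rintro ⟨_, ⟨i, j, a, hij, rfl⟩, rfl⟩
    exact ⟨i, j, f a, hij, by rw [map_add, map_one]; simp⟩
  · rintro ⟨i, j, b, hij, rfl⟩
    obtain ⟨a, rfl⟩ := hf b
    exact ⟨_, ⟨i, j, a, hij, rfl⟩, by rw [map_add, map_one]; simp⟩

end Elementary

section SquareZero

variable {A : Type*} [CommRing A] {K : Ideal A}

lemma Matrix.mul_eq_zero_of_mem_matrix {n : Type*} [Fintype n] [DecidableEq n]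
    (hK : K * K = ⊥) {X Y : Matrix n n A} (hX : X ∈ K.matrix n) (hY : Y ∈ K.matrix n) :
    X * Y = 0 := by
  ext i j
  rw [mul_apply, zero_apply]
  refine Finset.sum_eq_zero fun k _ => ?_
  simpa [hK] using Ideal.mul_mem_mul (hX i k) (hY k j)

lemma Matrix.one_add_mul_one_add_of_mem_matrix {n : Type*} [Fintype n] [DecidableEq n]
    (hK : K * K = ⊥) {X Y : Matrix n n A} (hX : X ∈ K.matrix n) (hY : Y ∈ K.matrix n) :
    (1 + X) * (1 + Y) = 1 + (X + Y) := by
  rw [add_mul, mul_add, mul_add, mul_eq_zero_of_mem_matrix hK hX hY, mul_one, one_mul, mul_one]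
  abel

variable {m : ℕ}

lemma one_add_sum_mem_elemSubgroup (hK : K * K = ⊥) {ι : Type*} (s : Finset ι)
    {X : ι → Matrix (Fin m) (Fin m) A} (hX : ∀ k ∈ s, X k ∈ K.matrix (Fin m))
    (hXE : ∀ k ∈ s, 1 + X k ∈ ElemSubgroup A m) :
    1 + ∑ k ∈ s, X k ∈ ElemSubgroup A m := by
  refine (Finset.sum_induction X (fun Y => Y ∈ K.matrix (Fin m) ∧ 1 + Y ∈ ElemSubgroup A m)
    ?_ ?_ fun k hk => ⟨hX k hk, hXE k hk⟩).2
  · rintro Y Z ⟨hY, hYE⟩ ⟨hZ, hZE⟩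
    exact ⟨add_mem hY hZ, one_add_mul_one_add_of_mem_matrix hK hY hZ ▸ mul_mem hYE hZE⟩
  · simp [(ElemSubgroup A m).one_mem]

lemma one_add_single_sub_single_mem_elemSubgroup {p q : Fin m} (hpq : p ≠ q) {a : A}
    (ha : a * a = 0) : 1 + (single p p a - single q q a) ∈ ElemSubgroup A m := by
  have hwhitehead : transvection p q a * transvection q p 1 * transvection p q (-a) *
      transvection q p (-1) * transvection q p (-a) = 1 + (single p p a - single q q a) := by
    simp only [transvection, mul_add, add_mul, mul_one, one_mul, single_mul_single_same,
      single_mul_single_of_ne, hpq, hpq.symm, ne_eq, not_false_eq_true, ha, mul_neg, neg_mul,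
      neg_neg, ← single_neg, zero_add, add_zero, single_zero]
    abel
  rw [← hwhitehead]
  refine mul_mem (mul_mem (mul_mem (mul_mem ?_ ?_) ?_) ?_) ?_ <;>
    apply transvection_mem_elemSubgroup <;> first | exact hpq | exact hpq.symm

lemma one_add_mem_elemSubgroup_of_trace_eq_zero (hK : K * K = ⊥) (z : Fin m)
    {X : Matrix (Fin m) (Fin m) A} (hX : X ∈ K.matrix (Fin m)) (htr : X.trace = 0) :
    1 + X ∈ ElemSubgroup A m := by
  set D : Fin m × Fin m → Matrix (Fin m) (Fin m) A := fun p =>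
    single p.1 p.2 (X p.1 p.2) - if p.1 = p.2 then single z z (X p.1 p.2) else 0
  have hXD : X = ∑ p, D p := by
    have htr' : ∑ i, single z z (X i i) = 0 := by
      rw [← single_zero z z, ← htr, trace]
      exact (map_sum (singleAddMonoidHom (α := A) z z) _ _).symm
    conv_lhs => rw [matrix_eq_sum_single X]
    simp [D, Finset.sum_sub_distrib, Fintype.sum_prod_type, htr']
  have hsingle : ∀ i j, ∀ a ∈ K, single i j a ∈ K.matrix (Fin m) :=
    fun i j a ha => (single_mem_matrix K.zero_mem).2 ha
  rw [hXD]
  refine one_add_sum_mem_elemSubgroup hK _ (fun ⟨i, j⟩ _ => ?_) (fun ⟨i, j⟩ _ => ?_)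
  · refine sub_mem (hsingle i j _ (hX i j)) ?_
    split_ifs
    exacts [hsingle z z _ (hX i j), zero_mem _]
  · by_cases hij : i = j
    · subst hij
      by_cases hiz : i = z
      · subst hiz
        simp [D, (ElemSubgroup A m).one_mem]
      · simp only [D]
        exact one_add_single_sub_single_mem_elemSubgroup hiz
          (by simpa [hK] using Ideal.mul_mem_mul (hX i i) (hX i i))
    · simp only [D, if_neg hij, sub_zero]
      exact transvection_mem_elemSubgroup hij _

lemma Matrix.det_one_add_single_self {n : Type*} [Fintype n] [DecidableEq n] (z : n) (t : A) :
    (1 + single z z t).det = 1 + t := by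
  rw [← diagonal_single, ← diagonal_one, diagonal_add, det_diagonal,
    Finset.prod_eq_single z (fun i _ hi => by simp [hi]) (by simp)]
  simp

lemma one_add_mem_elemSubgroup_of_det_eq_one (hK : K * K = ⊥)
    {X : Matrix (Fin m) (Fin m) A} (hX : X ∈ K.matrix (Fin m)) (hdet : (1 + X).det = 1) :
    1 + X ∈ ElemSubgroup A m := by
  cases m with
  | zero => simp [Subsingleton.elim X 0, (ElemSubgroup A 0).one_mem]
  | succ m =>
    set t := X.trace
    have hT : single 0 0 t ∈ K.matrix (Fin (m + 1)) :=
      (single_mem_matrix K.zero_mem).2 (sum_mem fun i _ => hX i i)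
    have hX' : X - single 0 0 t ∈ K.matrix (Fin (m + 1)) := sub_mem hX hT
    have hsplit : 1 + X = (1 + (X - single 0 0 t)) * (1 + single 0 0 t) := by
      rw [one_add_mul_one_add_of_mem_matrix hK hX' hT, sub_add_cancel]
    have htr : (X - single 0 0 t).trace = 0 := by simp [trace_sub, t]
    have hE := one_add_mem_elemSubgroup_of_trace_eq_zero hK 0 hX' htr
    have ht : t = 0 := by
      rw [hsplit, det_mul, det_eq_one_of_mem_elemSubgroup hE, one_mul,
        det_one_add_single_self] at hdet
      simpa using hdet
    simpa [ht] using hE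

end SquareZero

section Nilpotent

variable {A : Type*} [CommRing A] {m : ℕ}

lemma Ideal.Quotient.mapMatrix_mk_eq_iff {n : Type*} [Fintype n] [DecidableEq n] {I : Ideal A}
    {M P : Matrix n n A} :
    (Ideal.Quotient.mk I).mapMatrix M = (Ideal.Quotient.mk I).mapMatrix P ↔
      M - P ∈ I.matrix n := by
  simp [← Matrix.ext_iff, Ideal.Quotient.eq]

lemma exists_mem_elemSubgroup_mapMatrix_mk_eq {L I : Ideal A} (hLI : L * L ≤ I)
    {M : Matrix (Fin m) (Fin m) A} (hdet : M.det = 1) (hM : M - 1 ∈ L.matrix (Fin m)) :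
    ∃ P ∈ ElemSubgroup A m,
      (Ideal.Quotient.mk I).mapMatrix P = (Ideal.Quotient.mk I).mapMatrix M := by
  set π := Ideal.Quotient.mk I
  have hK : L.map π * L.map π = ⊥ := by
    rw [← Ideal.map_mul, eq_bot_iff, ← Ideal.map_quotient_self I]
    exact Ideal.map_mono hLI
  have hX : π.mapMatrix (M - 1) ∈ (L.map π).matrix (Fin m) :=
    fun i j => Ideal.mem_map_of_mem π (hM i j)
  have hMX : 1 + π.mapMatrix (M - 1) = π.mapMatrix M := by
    rw [map_sub, map_one, add_sub_cancel]
  have hdet' : (π.mapMatrix M).det = 1 := by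
    rw [← RingHom.map_det, hdet, map_one]
  have hE := one_add_mem_elemSubgroup_of_det_eq_one hK hX (hMX ▸ hdet')
  rwa [hMX, ← map_elemSubgroup_of_surjective Ideal.Quotient.mk_surjective] at hE

theorem mem_elemSubgroup_of_isNilpotent {I : Ideal A} (hI : IsNilpotent I)
    {M : Matrix (Fin m) (Fin m) A} (hdet : M.det = 1) (hM : 1 - M ∈ I.matrix (Fin m)) :
    M ∈ ElemSubgroup A m := by
  obtain ⟨k, hk⟩ := hI
  have happrox : ∀ t, ∃ P ∈ ElemSubgroup A m, M - P ∈ (I ^ (t + 1)).matrix (Fin m) := by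
    intro t
    induction t with
    | zero => exact ⟨1, (ElemSubgroup A m).one_mem, by simpa using neg_mem hM⟩
    | succ t ih =>
      obtain ⟨P, hP, hMP⟩ := ih
      have hPinv := inv_mem_elemSubgroup hP
      have hPunit : IsUnit P.det := by simp [det_eq_one_of_mem_elemSubgroup hP]
      have hMPinv : M * P⁻¹ - 1 ∈ (I ^ (t + 1)).matrix (Fin m) := by
        rw [← Ideal.Quotient.mapMatrix_mk_eq_iff, map_mul,
          Ideal.Quotient.mapMatrix_mk_eq_iff.2 hMP, ← map_mul, mul_nonsing_inv P hPunit]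
      obtain ⟨Q, hQ, hQM⟩ := exists_mem_elemSubgroup_mapMatrix_mk_eq
        (I := I ^ (t + 1 + 1)) (by rw [← pow_add]; exact Ideal.pow_le_pow_right (by omega))
        (by rw [det_mul, hdet, det_eq_one_of_mem_elemSubgroup hPinv, one_mul]) hMPinv
      refine ⟨Q * P, mul_mem hQ hP, ?_⟩
      rw [← Ideal.Quotient.mapMatrix_mk_eq_iff, map_mul, hQM, ← map_mul, mul_assoc,
        nonsing_inv_mul P hPunit, mul_one]
  obtain ⟨P, hP, hMP⟩ := happrox k
  have hbot : I ^ (k + 1) = ⊥ := eq_bot_iff.2 ((Ideal.pow_le_pow_right k.le_succ).trans hk.le)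
  rw [hbot, Ideal.matrix_bot, Ideal.mem_bot, sub_eq_zero] at hMP
  rwa [hMP]

end Nilpotent

theorem stmt14_general {A : Type*} [CommRing A] (m : ℕ)
    (N : Ideal A) (hN : ∀ x ∈ N, IsNilpotent x)
    (M : Matrix (Fin m) (Fin m) A) (hdet : M.det = 1)
    (hM : ∀ i j, ((1 : Matrix (Fin m) (Fin m) A) - M) i j ∈ N) :
    M ∈ ElemSubgroup A m := by
  set J : Ideal A := Ideal.span (Set.range fun p : Fin m × Fin m => (1 - M) p.1 p.2)
  have hJ : IsNilpotent J := by
    refine (Ideal.FG.isNilpotent_iff_le_nilradical (Submodule.fg_span (Set.finite_range _))).2 ?_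
    rw [Ideal.span_le]
    rintro _ ⟨p, rfl⟩
    exact hN _ (hM p.1 p.2)
  exact mem_elemSubgroup_of_isNilpotent hJ hdet fun i j => Ideal.subset_span ⟨(i, j), rfl⟩

/-- If `M ∈ SL_m(A)` is congruent to the identity modulo an ideal `N` of
nilpotent elements of a commutative `ℚ`-algebra `A`, then `M ∈ E_m(A)`. -/
theorem stmt14 {A : Type*} [CommRing A] [Algebra ℚ A] (m : ℕ)
    (N : Ideal A) (hN : ∀ x ∈ N, IsNilpotent x)
    (M : Matrix (Fin m) (Fin m) A) (hdet : M.det = 1)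
    (hM : ∀ i j, ((1 : Matrix (Fin m) (Fin m) A) - M) i j ∈ N) :
    M ∈ ElemSubgroup A m :=
  stmt14_general m N hN M hdet hM
end

section
/- The ring O(ℂ) of entire holomorphic functions on the complex plane has Bass stable rank equal to 1; i.e., for any f, g ∈ O(ℂ) with no common zeros (equivalently, (f,g) unimodular by the corona theorem for O(ℂ)), there exists c ∈ O(ℂ) such that f + cg has no zeros (is invertible in O(ℂ)). -/
/-!
We look for an entire `H` such that `g` divides `exp H - f`; then `c := (exp H - f) / g` is
entire and `f + c * g = exp H` has no zeros. Near a zero `a` of `g` of order `m`, `f` does not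
vanish and so has a holomorphic logarithm `L_a`, and `g ∣ exp H - f` near `a` as soon as `H`
agrees with `L_a` to order `m` at `a`. Such an `H` is `g * M`, where `M` is a Mittag-Leffler
function whose principal part at each zero `a` is that of `L_a / g`. The Mittag-Leffler function is
the sum of these principal parts, each corrected by an entire function that approximates it
within `2⁻ⁿ` on the disc of radius `|a| / 2` (a truncated Taylor series), which makes the series
converge locally uniformly.
-/

open Filter Topology Metric Set

theorem mem_nhdsNE_of_mem_codiscrete {X : Type*} [TopologicalSpace X] {s : Set X}
    (hs : s ∈ codiscrete X) (x : X) : s ∈ 𝓝[≠] x := by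
  simpa using mem_codiscreteWithin_iff_forall_mem_nhdsNE.1 hs x (mem_univ x)

theorem finite_setOf_norm_le_of_compl_mem_codiscrete {E : Type*} [NormedAddCommGroup E]
    [ProperSpace E] {S : Set E} (hS : Sᶜ ∈ codiscrete E) (R : ℝ) :
    {s : S | ‖(s : E)‖ ≤ R}.Finite := by
  refine (((isCompact_closedBall 0 R).finite_sdiff_of_mem_codiscreteWithin
    (codiscreteWithin_mono (subset_univ _) hS)).preimage Subtype.val_injective.injOn).subset ?_
  intro s hs
  simpa using hs

theorem exists_analyticAt_eq_of_eventuallyEq_nhdsNE {𝕜 E : Type*} [NontriviallyNormedField 𝕜]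
    [NormedAddCommGroup E] [NormedSpace 𝕜 E] {S : Set 𝕜} (hS : Sᶜ ∈ codiscrete 𝕜) {F : 𝕜 → E}
    (hF : ∀ z ∉ S, AnalyticAt 𝕜 F z) (φ : 𝕜 → 𝕜 → E) (hφ : ∀ a ∈ S, AnalyticAt 𝕜 (φ a) a)
    (hFφ : ∀ a ∈ S, F =ᶠ[𝓝[≠] a] φ a) :
    ∃ G : 𝕜 → E, (∀ z, AnalyticAt 𝕜 G z) ∧ (∀ z ∉ S, G z = F z) ∧ ∀ a ∈ S, G =ᶠ[𝓝 a] φ a := by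
  classical
  set G := S.piecewise (fun z => φ z z) F
  have hG_on (a : 𝕜) (ha : a ∈ S) : G =ᶠ[𝓝 a] φ a := by
    refine eventuallyEq_nhds_of_eventuallyEq_nhdsNE ?_ (piecewise_eq_of_mem _ _ _ ha)
    filter_upwards [mem_nhdsNE_of_mem_codiscrete hS a, hFφ a ha] with z hz hFz
    rw [← hFz]
    exact piecewise_eq_of_notMem _ _ _ hz
  refine ⟨G, fun z => ?_, fun z hz => piecewise_eq_of_notMem _ _ _ hz, hG_on⟩
  by_cases hz : z ∈ S
  · exact (hφ z hz).congr (hG_on z hz).symm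
  · refine (hF z hz).congr ?_
    filter_upwards [(compl_mem_codiscrete_iff.1 hS).1.isOpen_compl.mem_nhds hz] with w hw
    exact (piecewise_eq_of_notMem _ _ _ hw).symm

theorem FormalMultilinearSeries.differentiable_partialSum {𝕜 E F : Type*}
    [NontriviallyNormedField 𝕜] [NormedAddCommGroup E] [NormedSpace 𝕜 E] [NormedAddCommGroup F]
    [NormedSpace 𝕜 F] (p : FormalMultilinearSeries 𝕜 E F) (n : ℕ) :
    Differentiable 𝕜 (p.partialSum n) :=
  Differentiable.fun_sum fun k _ =>
    ((p k).contDiff.comp (contDiff_pi.2 fun _ => contDiff_id)).differentiable (n := 1) one_ne_zero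

theorem DifferentiableOn.exists_differentiable_norm_sub_lt {r : ℂ → ℂ} {R : ℝ}
    (hr : DifferentiableOn ℂ r (ball 0 R)) {ε : ℝ} (hε : 0 < ε) :
    ∃ p : ℂ → ℂ, Differentiable ℂ p ∧ ∀ z ∈ ball 0 (R / 2), ‖r z - p z‖ < ε := by
  rcases le_or_gt R 0 with hR | hR
  · refine ⟨0, differentiable_const 0, fun z hz => ?_⟩
    rw [ball_eq_empty.2 (by linarith)] at hz
    exact absurd hz (notMem_empty z)
  have hseries := (hr.mono (closedBall_subset_ball (by
    rw [Real.coe_toNNReal _ (by positivity)]; linarith))).hasFPowerSeriesOnBall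
    (R := (3 * R / 4).toNNReal) (by simpa using hR)
  have hunif := hseries.tendstoUniformlyOn (r' := (R / 2).toNNReal)
    (by exact_mod_cast (Real.toNNReal_lt_toNNReal_iff (by positivity)).2 (by linarith))
  obtain ⟨n, hn⟩ := (Metric.tendstoUniformlyOn_iff.1 hunif ε hε).exists
  refine ⟨_, (cauchyPowerSeries r 0 (3 * R / 4).toNNReal).differentiable_partialSum n,
    fun z hz => ?_⟩
  simpa [dist_eq_norm] using hn z (by simpa [Real.coe_toNNReal _ (half_pos hR).le] using hz)

theorem differentiableOn_tsum_sub_sum {ι : Type*} {d : ι → ℂ → ℂ} {ε : ι → ℝ}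
    (hε : Summable ε) {U : Set ℂ} (hU : IsOpen U) (F : Finset ι)
    (hd : ∀ i ∉ F, DifferentiableOn ℂ (d i) U) (hdε : ∀ i ∉ F, ∀ z ∈ U, ‖d i z‖ ≤ ε i) :
    DifferentiableOn ℂ (fun z => ∑' i, d i z - ∑ i ∈ F, d i z) U := by
  have hsum (z : ℂ) (hz : z ∈ U) : Summable fun i => d i z :=
    hε.of_norm_bounded_eventually <| eventually_cofinite.2 <|
      F.finite_toSet.subset fun i hi => by_contra fun hiF => hi (hdε i hiF z hz)
  refine (Complex.differentiableOn_tsum_of_summable_norm (hε.subtype _)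
    (fun i : {i // i ∉ F} => hd i i.2) hU fun i z hz => hdε i i.2 z hz).congr fun z hz => ?_
  exact sub_eq_of_eq_add' ((hsum z hz).sum_add_tsum_subtype_compl F).symm

theorem exists_mittagLeffler {S : Set ℂ} (hS : Sᶜ ∈ codiscrete ℂ) (r : ℂ → ℂ → ℂ)
    (hr : ∀ a ∈ S, DifferentiableOn ℂ (r a) {a}ᶜ) :
    ∃ M : ℂ → ℂ, (∀ z ∉ S, AnalyticAt ℂ M z) ∧
      ∀ a ∈ S, ∃ N : ℂ → ℂ, AnalyticAt ℂ N a ∧ M =ᶠ[𝓝[≠] a] r a + N := by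
  have hfin := finite_setOf_norm_le_of_compl_mem_codiscrete hS
  have : Countable S := by
    obtain ⟨hclosed, hdiscrete⟩ := compl_mem_codiscrete_iff.1 hS
    exact (hclosed.isLindelof.countable hdiscrete.to_subtype).to_subtype
  let _ : Encodable S := Encodable.ofCountable S
  set ε : S → ℝ := fun s => (1 / 2) ^ Encodable.encode s
  have hε : Summable ε := summable_geometric_two.comp_injective Encodable.encode_injective
  have hr_ball (s : S) : DifferentiableOn ℂ (r s) (ball 0 ‖(s : ℂ)‖) :=
    (hr s s.2).mono fun z hz hzs => by simp_all
  choose p hp hpr using fun s : S =>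
    (hr_ball s).exists_differentiable_norm_sub_lt (ε := ε s) (by positivity)
  set d : S → ℂ → ℂ := fun s z => r s z - p s z
  have hd_analytic {s : S} {z : ℂ} (hz : z ≠ s) : AnalyticAt ℂ (d s) z :=
    ((hr s s.2).analyticAt (isOpen_compl_singleton.mem_nhds hz)).sub ((hp s).analyticAt z)
  have hlocal (a : ℂ) : ∃ F : Finset S, (∀ s : S, ‖(s : ℂ)‖ ≤ ‖a‖ → s ∈ F) ∧
      AnalyticAt ℂ (fun z => ∑' s, d s z - ∑ s ∈ F, d s z) a := by
    set R := ‖a‖ + 1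
    refine ⟨(hfin (2 * R)).toFinset, fun s hs => (hfin _).mem_toFinset.2 (show ‖(s : ℂ)‖ ≤ 2 * R by
      linarith [norm_nonneg a]), ?_⟩
    have hfar {s : S} (hs : s ∉ (hfin (2 * R)).toFinset) : 2 * R < ‖(s : ℂ)‖ := by
      simpa using hs
    refine (differentiableOn_tsum_sub_sum (U := ball 0 R) hε isOpen_ball _ (fun s hs => ?_)
      fun s hs z hz => ?_).analyticAt (isOpen_ball.mem_nhds (by simp [R]))
    · refine ((hr_ball s).mono fun z hz => ?_).sub (hp s).differentiableOn
      simp only [mem_ball, dist_zero_right] at hz ⊢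
      linarith [hfar hs, norm_nonneg z]
    · refine (hpr s z ?_).le
      simp only [mem_ball, dist_zero_right] at hz ⊢
      linarith [hfar hs]
  refine ⟨fun z => ∑' s, d s z, fun z hz => ?_, fun a ha => ?_⟩
  · obtain ⟨F, -, hF⟩ := hlocal z
    convert hF.add (Finset.analyticAt_fun_sum F fun s _ => hd_analytic fun h => hz (h ▸ s.2))
      using 1
    ext w
    simp
  · obtain ⟨F, hFmem, hF⟩ := hlocal a
    have haF : ⟨a, ha⟩ ∈ F := hFmem _ le_rfl
    refine ⟨fun z => (∑' s, d s z - ∑ s ∈ F, d s z) + ∑ s ∈ F.erase ⟨a, ha⟩, d s z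
      - p ⟨a, ha⟩ z, ?_, Eventually.of_forall fun z => ?_⟩
    · exact (hF.add (Finset.analyticAt_fun_sum _ fun s hs => hd_analytic fun h =>
        (Finset.mem_erase.1 hs).1 (Subtype.ext h.symm))).sub ((hp _).analyticAt a)
    · simp only [Pi.add_apply, ← Finset.add_sum_erase F _ haF, d]
      ring

theorem AnalyticAt.exists_eq_add_pow_mul {𝕜 : Type*} [NontriviallyNormedField 𝕜] {w : 𝕜 → 𝕜}
    {a : 𝕜} (hw : AnalyticAt 𝕜 w a) (m : ℕ) :
    ∃ T B : 𝕜 → 𝕜, Differentiable 𝕜 T ∧ AnalyticAt 𝕜 B a ∧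
      ∀ z, w z = T z + (z - a) ^ m * B z := by
  induction m with
  | zero => exact ⟨0, w, differentiable_const 0, hw, fun z => by simp⟩
  | succ m ih =>
    obtain ⟨T, B, hT, ⟨p, hp⟩, hTB⟩ := ih
    refine ⟨fun z => T z + (z - a) ^ m * B a, dslope B a, by fun_prop,
      hp.has_fpower_series_dslope_fslope.analyticAt, fun z => ?_⟩
    have hB := sub_smul_dslope B a z
    rw [smul_eq_mul] at hB
    rw [hTB z]
    linear_combination -(z - a) ^ m * hB

theorem Differentiable.setOf_ne_zero_mem_codiscrete {g : ℂ → ℂ} (hg : Differentiable ℂ g)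
    (hg0 : g ≠ 0) : {z | g z ≠ 0} ∈ codiscrete ℂ :=
  (AnalyticOnNhd.eqOn_zero_or_eventually_ne_zero_of_preconnected (fun z _ => hg.analyticAt z)
    isPreconnected_univ).resolve_left fun h => hg0 (funext fun z => h (mem_univ z))

theorem Differentiable.exists_eventuallyEq_pow_mul {g : ℂ → ℂ} (hg : Differentiable ℂ g)
    (hg0 : g ≠ 0) (a : ℂ) :
    ∃ (m : ℕ) (u : ℂ → ℂ), AnalyticAt ℂ u a ∧ u a ≠ 0 ∧
      g =ᶠ[𝓝 a] fun z => (z - a) ^ m * u z := by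
  obtain ⟨b, hb⟩ := Function.ne_iff.1 hg0
  have hne : analyticOrderAt g a ≠ ⊤ :=
    AnalyticOnNhd.analyticOrderAt_ne_top_of_isPreconnected (fun z _ => hg.analyticAt z)
      isPreconnected_univ (mem_univ b) (mem_univ a)
      (by simp [(hg.analyticAt b).analyticOrderAt_eq_zero.2 hb])
  exact ⟨_, (hg.analyticAt a).analyticOrderAt_ne_top.1 hne⟩

/-- Interpolation of jets along the zeros of an entire function. -/
theorem Differentiable.exists_differentiable_sub_eventuallyEq_mul {g : ℂ → ℂ}
    (hg : Differentiable ℂ g) (hg0 : g ≠ 0) {L : ℂ → ℂ → ℂ}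
    (hL : ∀ a, g a = 0 → AnalyticAt ℂ (L a) a) :
    ∃ H : ℂ → ℂ, Differentiable ℂ H ∧
      ∀ a, g a = 0 → ∃ ψ : ℂ → ℂ, AnalyticAt ℂ ψ a ∧ H - L a =ᶠ[𝓝 a] g * ψ := by
  have hZ : {z | g z = 0}ᶜ ∈ codiscrete ℂ := hg.setOf_ne_zero_mem_codiscrete hg0
  choose m u hu hua hgu using hg.exists_eventuallyEq_pow_mul hg0
  choose! T B hT hB hTB using fun a (ha : g a = 0) =>
    ((hL a ha).div (hu a) (hua a)).exists_eq_add_pow_mul (m a)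
  obtain ⟨M, hM, hMN⟩ := exists_mittagLeffler hZ (fun a z => T a z / (z - a) ^ m a) fun a ha =>
    (hT a ha).differentiableOn.div (by fun_prop) fun z hz => pow_ne_zero _ (sub_ne_zero.2 hz)
  choose! N hN hMN using hMN
  have hgM (a : ℂ) (ha : g a = 0) : g * M =ᶠ[𝓝[≠] a] u a * T a + g * N a := by
    filter_upwards [hMN a ha, nhdsWithin_le_nhds (hgu a), self_mem_nhdsWithin] with z hMz hgz hz
    have hza : (z - a) ^ m a ≠ 0 := pow_ne_zero _ (sub_ne_zero.2 hz)
    simp only [Pi.mul_apply, Pi.add_apply] at hMz ⊢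
    rw [hMz, hgz]
    field_simp
  obtain ⟨H, hH, -, hHN⟩ := exists_analyticAt_eq_of_eventuallyEq_nhdsNE hZ (F := g * M)
    (fun z hz => (hg.analyticAt z).mul (hM z hz)) (fun a => u a * T a + g * N a)
    (fun a ha => ((hu a).mul ((hT a ha).analyticAt a)).add ((hg.analyticAt a).mul (hN a ha))) hgM
  refine ⟨H, fun z => (hH z).differentiableAt, fun a ha =>
    ⟨N a - B a, (hN a ha).sub (hB a ha), ?_⟩⟩
  filter_upwards [hHN a ha, hgu a, (hu a).continuousAt.eventually_ne (hua a)] with z hHz hgz huz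
  have hLz : L a z = u a z * (T a z + (z - a) ^ m a * B a z) := by
    rw [← hTB a ha z, Pi.div_apply, mul_div_cancel₀ _ huz]
  simp only [Pi.sub_apply, Pi.mul_apply, Pi.add_apply] at hHz ⊢
  rw [hHz, hLz, hgz]
  ring

theorem Differentiable.exists_differentiable_eq_mul {g h : ℂ → ℂ} (hg : Differentiable ℂ g)
    (hg0 : g ≠ 0) (hh : Differentiable ℂ h)
    (hdvd : ∀ a, g a = 0 → ∃ χ : ℂ → ℂ, AnalyticAt ℂ χ a ∧ h =ᶠ[𝓝 a] g * χ) :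
    ∃ c : ℂ → ℂ, Differentiable ℂ c ∧ h = g * c := by
  choose! χ hχ hhχ using hdvd
  have hZ : {z | g z = 0}ᶜ ∈ codiscrete ℂ := hg.setOf_ne_zero_mem_codiscrete hg0
  have hquot (a : ℂ) (ha : g a = 0) : h / g =ᶠ[𝓝[≠] a] χ a := by
    filter_upwards [nhdsWithin_le_nhds (hhχ a ha), mem_nhdsNE_of_mem_codiscrete hZ a]
      with z hz hgz
    rw [Pi.div_apply, hz, Pi.mul_apply, mul_div_cancel_left₀ _ hgz]
  obtain ⟨c, hc, hch, -⟩ := exists_analyticAt_eq_of_eventuallyEq_nhdsNE hZ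
    (fun z hz => (hh.analyticAt z).div (hg.analyticAt z) hz) χ hχ hquot
  refine ⟨c, fun z => (hc z).differentiableAt, funext fun z => ?_⟩
  by_cases hz : g z = 0
  · simp [(hhχ z hz).self_of_nhds, hz]
  · rw [Pi.mul_apply, hch z hz, Pi.div_apply, mul_div_cancel₀ _ hz]

theorem exists_analyticAt_cexp_eventuallyEq {f : ℂ → ℂ} {a : ℂ} (hf : AnalyticAt ℂ f a)
    (ha : f a ≠ 0) :
    ∃ L : ℂ → ℂ, AnalyticAt ℂ L a ∧ (fun z => Complex.exp (L z)) =ᶠ[𝓝 a] f := by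
  refine ⟨fun z => Complex.log (f a) + Complex.log (f z / f a), ?_, ?_⟩
  · refine analyticAt_const.add ((hf.div analyticAt_const ha).clog ?_)
    simp [div_self ha]
  · filter_upwards [hf.continuousAt.eventually_ne ha] with z hz
    rw [Complex.exp_add, Complex.exp_log ha, Complex.exp_log (div_ne_zero hz ha)]
    field_simp

theorem AnalyticAt.exists_cexp_sub_cexp_eventuallyEq_mul {g H L ψ : ℂ → ℂ} {a : ℂ}
    (hH : AnalyticAt ℂ H a) (hL : AnalyticAt ℂ L a) (hψ : AnalyticAt ℂ ψ a)
    (hHL : H - L =ᶠ[𝓝 a] g * ψ) :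
    ∃ χ : ℂ → ℂ, AnalyticAt ℂ χ a ∧
      (fun z => Complex.exp (H z) - Complex.exp (L z)) =ᶠ[𝓝 a] g * χ := by
  -- `dslope exp 0` is the entire function `(exp t - 1) / t`, which divides `exp x - exp y` by `x - y`.
  have hE : Differentiable ℂ (dslope Complex.exp 0) := differentiableOn_univ.1
    ((Complex.differentiableOn_dslope univ_mem).2 Complex.differentiable_exp.differentiableOn)
  refine ⟨fun z => ψ z * (Complex.exp (L z) * dslope Complex.exp 0 (H z - L z)),
    hψ.mul (hL.cexp.mul ((hE.analyticAt _).comp (hH.sub hL))), ?_⟩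
  filter_upwards [hHL] with z hz
  have hslope := sub_smul_dslope Complex.exp 0 (H z - L z)
  rw [smul_eq_mul, sub_zero, Complex.exp_zero] at hslope
  simp only [Pi.sub_apply, Pi.mul_apply] at hz ⊢
  rw [show Complex.exp (H z) = Complex.exp (L z) * Complex.exp (H z - L z) by
    rw [← Complex.exp_add, add_sub_cancel]]
  linear_combination -Complex.exp (L z) * hslope
    + Complex.exp (L z) * dslope Complex.exp 0 (H z - L z) * hz

/-- The ring of entire functions has Bass stable rank one: for entire `f, g`
with no common zeros there is an entire `c` such that `f + c * g` has no
zeros. -/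
theorem stmt15 (f g : ℂ → ℂ) (hf : Differentiable ℂ f)
    (hg : Differentiable ℂ g) (h : ∀ z, f z ≠ 0 ∨ g z ≠ 0) :
    ∃ c : ℂ → ℂ, Differentiable ℂ c ∧ ∀ z, f z + c z * g z ≠ 0 := by
  rcases eq_or_ne g 0 with rfl | hg0
  · exact ⟨0, differentiable_const 0, fun z => by simpa using h z⟩
  choose! L hL hLf using fun a (ha : g a = 0) =>
    exists_analyticAt_cexp_eventuallyEq (hf.analyticAt a) ((h a).resolve_right (not_not.2 ha))
  obtain ⟨H, hH, hHL⟩ := hg.exists_differentiable_sub_eventuallyEq_mul hg0 hL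
  have hdvd (a : ℂ) (ha : g a = 0) : ∃ χ : ℂ → ℂ, AnalyticAt ℂ χ a ∧
      (fun z => Complex.exp (H z) - f z) =ᶠ[𝓝 a] g * χ := by
    obtain ⟨ψ, hψ, hHψ⟩ := hHL a ha
    obtain ⟨χ, hχ, hexp⟩ := (hH.analyticAt a).exists_cexp_sub_cexp_eventuallyEq_mul (hL a ha) hψ hHψ
    refine ⟨χ, hχ, ?_⟩
    filter_upwards [hexp, hLf a ha] with z hz hLz
    rwa [← hLz]
  obtain ⟨c, hc, hcg⟩ := hg.exists_differentiable_eq_mul hg0 (by fun_prop) hdvd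
  refine ⟨c, hc, fun z => ?_⟩
  have hcz : Complex.exp (H z) - f z = g z * c z := congrFun hcg z
  rw [show f z + c z * g z = Complex.exp (H z) by linear_combination -hcz]
  exact Complex.exp_ne_zero _
end
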